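/- Let X ⊆ ℕ be a finite set which is ω^{n+1}-large and exp-sparse, and let c ∈ ℕ with 4^c ≤ min X. For any finite W ⊆ ℕ with |W| ≤ c and max X < min W, and for any colouring P : [X ∪ W]^2 → 2, there exists Y ⊆ X such that Y is ω^n-large and P(y, w) = P(y', w) for all w ∈ W and all y, y' ∈ Y. -/

import Mathlib

/- Ordinals `α < ω^ω` are represented in Cantor normal form as the list of their
exponents in nonincreasing order: `[n₀, n₁, …, n_{k-1}]` codes `ω^{n₀} + ⋯ + ω^{n_{k-1}}`,
and such a list is a valid Cantor normal form when it is sorted w.r.t. `≥`. -/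

/-- The Ketonen–Solovay operation `α[m]`: `0[m] = 0`; `α[m] = β` if `α = β + 1`;
`α[m] = β + ω^(n-1)·m` if `α = β + ω^n` with `n ≥ 1`. -/
def KSstep : List ℕ → ℕ → List ℕ
  | [], _ => []
  | [0], _ => []
  | [Nat.succ n], m => List.replicate m n
  | a :: b :: l, m => a :: KSstep (b :: l) m

/-- A finite set `X = {x₀ < ⋯ < x_{ℓ-1}} ⊆ ℕ` is `α`-large if `α[x₀][x₁]⋯[x_{ℓ-1}| = 0`. -/
def IsLarge (α : List ℕ) (X : Finset ℕ) : Prop :=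
  (X.sort (· ≤ ·)).foldl KSstep α = []

/-- A finite set `X ⊆ ℕ` (with `min X ≥ 3`) is exp-sparse if for all `x, y ∈ X`,
`x < y` implies `4^x < y`. -/
def ExpSparse (X : Finset ℕ) : Prop :=
  (∀ x ∈ X, 3 ≤ x) ∧ ∀ x ∈ X, ∀ y ∈ X, x < y → 4 ^ x < y

/-- A finite set `X ⊆ ℕ` is `α`-sparse if for all `x, y ∈ X` with `x < y`,
the interval `(x, y]` is `α`-large. -/
def SparseFor (α : List ℕ) (X : Finset ℕ) : Prop :=
  ∀ x ∈ X, ∀ y ∈ X, x < y → IsLarge α (Finset.Ioc x y)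
/-!
Write `x₀ = min X`. Since `ω^(n+1)[x₀] = ω^n·x₀`, the set `X ∖ {x₀}` is `ω^n·x₀`-large, and
`x₀ ≥ 4^c ≥ 2^|W|`. The heart of the matter is a pigeonhole principle for natural sums on
exp-sparse sets: if `A ∪ B` is `(α ⊕ β)`-large, then `A` is `α`-large or `B` is `β`-large. It is
proved by induction on `A ∪ B`: if its minimum `x` lies in `B`, the step `(α ⊕ β)[x]` may be
replaced by `α ⊕ β[x]`, because largeness of a set all of whose elements are `≥ m` survives any
chain of steps `γ ↦ γ[p]` with `p ≤ m`, and exp-sparseness makes the next element big enough to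
rebuild `α ⊕ β[x]` from `(α ⊕ β)[x]` by such steps. Splitting `ω^n·m = ω^n·⌊m/2⌋ ⊕ ω^n·⌈m/2⌉`
along the colour of each `w ∈ W` in turn halves `m` at most `|W|` times, which leaves an
`ω^n`-large homogeneous set.
-/

open scoped List

abbrev IsCNF (α : List ℕ) : Prop := α.Pairwise (· ≥ ·)

lemma KSstep_cons {l : List ℕ} (hl : l ≠ []) (a m : ℕ) :
    KSstep (a :: l) m = a :: KSstep l m := by
  obtain ⟨b, l, rfl⟩ := List.exists_cons_of_ne_nil hl
  cases a <;> rfl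

lemma KSstep_append (ρ : List ℕ) {σ : List ℕ} (hσ : σ ≠ []) (m : ℕ) :
    KSstep (ρ ++ σ) m = ρ ++ KSstep σ m := by
  induction ρ with
  | nil => rfl
  | cons a ρ ih => rw [List.cons_append, KSstep_cons (by simp [hσ]), ih, List.cons_append]

@[simp] lemma KSstep_append_zero (ρ : List ℕ) (m : ℕ) : KSstep (ρ ++ [0]) m = ρ := by
  rw [KSstep_append ρ (List.cons_ne_nil 0 []), KSstep, List.append_nil]

@[simp] lemma KSstep_append_succ (ρ : List ℕ) (s m : ℕ) :
    KSstep (ρ ++ [s + 1]) m = ρ ++ List.replicate m s := by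
  rw [KSstep_append ρ (List.cons_ne_nil _ []), KSstep]

lemma KSstep_zero (γ : List ℕ) : KSstep γ 0 = γ.dropLast := by
  rcases γ.eq_nil_or_concat' with rfl | ⟨ρ, d, rfl⟩
  · rfl
  · cases d <;> simp

lemma KSstep_isPrefix_KSstep (γ : List ℕ) {x y : ℕ} (hxy : x ≤ y) :
    KSstep γ x <+: KSstep γ y := by
  rcases γ.eq_nil_or_concat' with rfl | ⟨ρ, d, rfl⟩
  · exact List.prefix_refl _
  · cases d with
    | zero => simp
    | succ s =>
      rw [KSstep_append_succ, KSstep_append_succ, List.prefix_append_right_inj,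
        ← Nat.add_sub_cancel' hxy, List.replicate_add]
      exact List.prefix_append _ _

lemma length_KSstep_le (γ : List ℕ) (x : ℕ) : (KSstep γ x).length ≤ γ.length + x := by
  rcases γ.eq_nil_or_concat' with rfl | ⟨ρ, d, rfl⟩
  · simp [KSstep]
  · cases d <;> simp; omega

lemma IsCNF.KSstep {γ : List ℕ} (hγ : IsCNF γ) (x : ℕ) : IsCNF (KSstep γ x) := by
  rcases γ.eq_nil_or_concat' with rfl | ⟨ρ, d, rfl⟩
  · exact List.Pairwise.nil
  · rw [IsCNF, List.pairwise_append] at hγ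
    cases d with
    | zero => simpa using hγ.1
    | succ s =>
      rw [KSstep_append_succ, IsCNF, List.pairwise_append]
      refine ⟨hγ.1, List.pairwise_replicate_of_refl, fun a ha b hb => ?_⟩
      rw [List.eq_of_mem_replicate hb]
      exact (hγ.2.2 a ha _ (List.mem_singleton_self _)).trans' (Nat.le_succ s)

def natSum (α β : List ℕ) : List ℕ := (α ++ β).insertionSort (· ≥ ·)

lemma isCNF_natSum (α β : List ℕ) : IsCNF (natSum α β) := List.pairwise_insertionSort _ _

lemma natSum_perm (α β : List ℕ) : natSum α β ~ α ++ β := List.perm_insertionSort _ _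

lemma natSum_eq_of_perm {α β γ : List ℕ} (hγ : IsCNF γ) (h : γ ~ α ++ β) :
    natSum α β = γ :=
  ((natSum_perm α β).trans h.symm).eq_of_pairwise' (isCNF_natSum α β) hγ

lemma natSum_comm (α β : List ℕ) : natSum α β = natSum β α :=
  natSum_eq_of_perm (isCNF_natSum β α) ((natSum_perm β α).trans List.perm_append_comm)

lemma natSum_congr_left {α α' : List ℕ} (h : α ~ α') (β : List ℕ) :
    natSum α β = natSum α' β :=
  natSum_eq_of_perm (isCNF_natSum α' β) ((natSum_perm α' β).trans (h.append_right β).symm)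

lemma natSum_nil_left {β : List ℕ} (hβ : IsCNF β) : natSum [] β = β :=
  natSum_eq_of_perm hβ (List.Perm.refl β)

lemma natSum_eq_nil {α β : List ℕ} (h : natSum α β = []) : α = [] := by
  have := (natSum_perm α β).symm
  rw [h] at this
  exact (List.append_eq_nil_iff.1 this.eq_nil).1

lemma natSum_replicate (a b n : ℕ) :
    natSum (List.replicate a n) (List.replicate b n) = List.replicate (a + b) n :=
  natSum_eq_of_perm List.pairwise_replicate_of_refl (by rw [List.replicate_add])

lemma natSum_append_append {γ γ' δ δ' : List ℕ}
    (h : ∀ a ∈ γ ++ δ, ∀ b ∈ γ' ++ δ', b ≤ a) :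
    natSum (γ ++ γ') (δ ++ δ') = natSum γ δ ++ natSum γ' δ' := by
  refine natSum_eq_of_perm (List.pairwise_append.2 ⟨isCNF_natSum γ δ, isCNF_natSum γ' δ',
    fun a ha b hb => h a ((natSum_perm γ δ).subset ha) b ((natSum_perm γ' δ').subset hb)⟩) ?_
  refine ((natSum_perm γ δ).append (natSum_perm γ' δ')).trans ?_
  rw [List.perm_iff_count]
  intro a
  simp only [List.count_append]
  omega

lemma natSum_append_split (α : List ℕ) {β τ : List ℕ} {d : ℕ} (hβ : ∀ b ∈ β, d ≤ b)
    (hτ : ∀ t ∈ τ, t ≤ d) :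
    natSum α (β ++ τ) = natSum (α.filter (d ≤ ·)) β ++ natSum (α.filter (· < d)) τ := by
  have hperm : α ~ α.filter (d ≤ ·) ++ α.filter (· < d) := by
    rw [List.filter_congr (p := (· < d)) (q := fun a => !decide (d ≤ a))
      fun a _ => by simp only [← decide_not, Nat.not_le]]
    exact (List.filter_append_perm _ α).symm
  rw [natSum_congr_left hperm, natSum_append_append]
  simp only [List.mem_append, List.mem_filter, decide_eq_true_eq]
  rintro a (⟨-, ha⟩ | ha) b (⟨-, hb⟩ | hb)
  · exact hb.le.trans ha
  · exact (hτ b hb).trans ha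
  · exact hb.le.trans (hβ a ha)
  · exact (hτ b hb).trans (hβ a ha)

def KSReach (m : ℕ) : List ℕ → List ℕ → Prop :=
  Relation.ReflTransGen fun γ δ => ∃ p ≤ m, δ = KSstep γ p

namespace KSReach

variable {m : ℕ} {γ δ ε : List ℕ}

lemma refl (m : ℕ) (γ : List ℕ) : KSReach m γ γ := Relation.ReflTransGen.refl

lemma step (γ : List ℕ) {p : ℕ} (hp : p ≤ m) : KSReach m γ (KSstep γ p) :=
  Relation.ReflTransGen.single ⟨p, hp, rfl⟩

lemma trans (h₁ : KSReach m γ δ) (h₂ : KSReach m δ ε) : KSReach m γ ε :=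
  Relation.ReflTransGen.trans h₁ h₂

lemma eq_nil (h : KSReach m [] δ) : δ = [] := by
  induction h with
  | refl => rfl
  | tail _ hstep ih => obtain ⟨p, -, rfl⟩ := hstep; rw [ih]; rfl

lemma of_isPrefix (h : δ <+: γ) : KSReach m γ δ := by
  obtain ⟨σ, rfl⟩ := h
  induction σ using List.reverseRecOn with
  | nil => simpa using refl m δ
  | append_singleton σ a ih =>
    refine trans ?_ ih
    simpa [KSstep_zero, ← List.append_assoc] using step (δ ++ σ ++ [a]) (Nat.zero_le m)

lemma append_left (ρ : List ℕ) (h : KSReach m γ δ) : KSReach m (ρ ++ γ) (ρ ++ δ) := by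
  induction h with
  | refl => exact refl m _
  | @tail δ ε _ hstep ih =>
    obtain ⟨p, hp, rfl⟩ := hstep
    rcases eq_or_ne δ [] with rfl | hδ
    · simpa [KSstep] using ih
    · exact (KSstep_append ρ hδ p ▸ ih.trans (step _ hp))

lemma cons (a : ℕ) (h : KSReach m γ δ) : KSReach m (a :: γ) (a :: δ) := h.append_left [a]

end KSReach

lemma ksReach_KSstep_KSstep (γ : List ℕ) {x y : ℕ} (hxy : x ≤ y) :
    KSReach y (KSstep γ y) (KSstep (KSstep γ x) y) :=
  (KSReach.of_isPrefix (KSstep_isPrefix_KSstep γ hxy)).trans (KSReach.step _ le_rfl)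

lemma ksReach_replicate {m : ℕ} (a : ℕ) {δ : List ℕ} (hδ : IsCNF δ)
    (hδa : ∀ b ∈ δ, b ≤ a) {j : ℕ} (hj : δ.length ≤ j) (hm : δ.length ≤ m) :
    KSReach m (List.replicate j a) δ := by
  induction a using Nat.strong_induction_on generalizing j δ with | _ a iha
  induction δ generalizing j with
  | nil => exact KSReach.of_isPrefix List.nil_prefix
  | cons b δ ihδ =>
    simp only [List.length_cons] at hj hm
    obtain ⟨j, rfl⟩ : ∃ j', j = j' + 1 := ⟨j - 1, by omega⟩
    rw [List.replicate_succ]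
    rcases (hδa b List.mem_cons_self).lt_or_eq with hba | rfl
    · obtain ⟨a, rfl⟩ : ∃ a', a = a' + 1 := ⟨a - 1, by omega⟩
      have hle : ∀ c ∈ b :: δ, c ≤ a := fun c hc => by
        rcases List.mem_cons.1 hc with rfl | hc
        exacts [Nat.le_of_lt_succ hba, (List.rel_of_pairwise_cons hδ hc).trans (by omega)]
      exact (KSReach.of_isPrefix ⟨_, rfl⟩).trans
        ((KSReach.step [a + 1] le_rfl).trans (iha a (by omega) hδ hle (by simpa) (by simpa)))
    · exact (ihδ hδ.of_cons (fun c hc => hδa c (List.mem_cons_of_mem _ hc)) (by omega)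
        (by omega)).cons b

lemma isLarge_nil (X : Finset ℕ) : IsLarge [] X :=
  List.foldl_fixed' (fun _ => rfl) _

lemma isLarge_empty {γ : List ℕ} : IsLarge γ ∅ ↔ γ = [] := by
  rw [IsLarge, Finset.sort_empty, List.foldl_nil]

lemma isLarge_insert {γ : List ℕ} {x : ℕ} {X : Finset ℕ} (hx : ∀ z ∈ X, x < z) :
    IsLarge γ (insert x X) ↔ IsLarge (KSstep γ x) X := by
  rw [IsLarge, Finset.sort_insert _ (fun z hz => (hx z hz).le) (fun h => lt_irrefl x (hx x h)),
    List.foldl_cons, IsLarge]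

lemma IsLarge.of_ksReach {X : Finset ℕ} {m : ℕ} {γ δ : List ℕ} (hX : ∀ z ∈ X, m ≤ z)
    (hr : KSReach m γ δ) (h : IsLarge γ X) : IsLarge δ X := by
  induction X using Finset.induction_on_min generalizing m γ δ with
  | empty => rw [isLarge_empty] at h ⊢; exact (h ▸ hr).eq_nil
  | insert x X hx ih =>
    have hmx : m ≤ x := hX x (Finset.mem_insert_self x X)
    induction hr with
    | refl => exact h
    | @tail δ ε _ hstep ihr =>
      obtain ⟨p, hp, rfl⟩ := hstep
      rw [isLarge_insert hx] at ihr ⊢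
      exact ih (fun z hz => (hx z hz).le) (ksReach_KSstep_KSstep δ (hp.trans hmx)) ihr

theorem ksReach_KSstep_natSum {α β : List ℕ} (hβ : IsCNF β) (hβ0 : β ≠ []) {x m : ℕ}
    (hm : x + α.length ≤ m) : KSReach m (KSstep (natSum α β) x) (natSum α (KSstep β x)) := by
  obtain ⟨β, d, rfl⟩ := β.eq_nil_or_concat'.resolve_left hβ0
  have hβd : ∀ b ∈ β, d ≤ b := fun b hb => (List.pairwise_append.1 hβ).2.2 b hb d (by simp)
  have htail : ∀ t ∈ KSstep [d] x, t ≤ d := by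
    intro t ht
    cases d with
    | zero => exact absurd ht List.not_mem_nil
    | succ s => exact (List.eq_of_mem_replicate ht).trans_le (Nat.le_succ s)
  rw [KSstep_append β (List.cons_ne_nil d []), natSum_append_split α hβd htail,
    natSum_append_split α hβd (by simp)]
  set αL := α.filter (· < d)
  have hαL : ∀ a ∈ αL, a < d := fun a ha => by simpa using (List.mem_filter.1 ha).2
  have hd : natSum αL [d] = [d] ++ natSum αL [] := by
    simpa [natSum_nil_left (List.pairwise_singleton _ d)] using
      natSum_append_append (γ := []) (γ' := αL) (δ := [d]) (δ' := [])
        (by simpa using fun b hb => (hαL b hb).le)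
  rw [hd, ← List.append_assoc]
  -- if `αL = []` the step hits the term `ω^d` on both sides; otherwise drop everything below `d`
  -- and rebuild `αL ⊕ β[x]` from the single term `ω^d`
  rcases eq_or_ne αL [] with hL | hL
  · rw [hL, natSum_nil_left (IsCNF.KSstep (List.pairwise_singleton _ d) x),
      natSum_nil_left List.Pairwise.nil, List.append_nil, KSstep_append _ (List.cons_ne_nil d [])]
    exact KSReach.refl m _
  obtain ⟨a, ha⟩ := List.exists_mem_of_ne_nil αL hL
  obtain ⟨s, rfl⟩ : ∃ s, d = s + 1 := ⟨d - 1, by have := hαL a ha; omega⟩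
  have hlen : (natSum αL (KSstep [s + 1] x)).length ≤ m := by
    have : αL.length ≤ α.length := List.length_filter_le _ α
    rw [(natSum_perm _ _).length_eq, List.length_append, KSstep, List.length_replicate]
    omega
  rw [KSstep_append _ fun h => hL (natSum_eq_nil h)]
  refine (KSReach.of_isPrefix (List.prefix_append _ _)).trans (KSReach.append_left _ ?_)
  refine (KSReach.step [s + 1] le_rfl).trans
    (ksReach_replicate s (isCNF_natSum _ _) (fun b hb => ?_) hlen hlen)
  rcases List.mem_append.1 ((natSum_perm _ _).subset hb) with hb | hb
  · exact Nat.le_of_lt_succ (hαL b hb)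
  · exact (List.eq_of_mem_replicate hb).le

def ExpSeparated (S : Finset ℕ) : Prop := ∀ x ∈ S, ∀ y ∈ S, x < y → 4 ^ x < y

lemma ExpSeparated.mono {S T : Finset ℕ} (hS : ExpSeparated S) (hT : T ⊆ S) : ExpSeparated T :=
  fun x hx y hy => hS x (hT hx) y (hT hy)

lemma two_mul_le_four_pow (z : ℕ) : 2 * z ≤ 4 ^ z := by
  induction z with
  | zero => simp
  | succ k ih => have := Nat.one_le_pow k 4 (by norm_num); rw [pow_succ]; omega

theorem isLarge_or_isLarge_of_isLarge_natSum {A B : Finset ℕ} {α β : List ℕ}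
    (hsep : ExpSeparated (A ∪ B)) (hdisj : Disjoint A B) (hα : IsCNF α) (hβ : IsCNF β)
    (hbound : ∀ z ∈ A ∪ B, α.length + β.length + z ≤ 4 ^ z)
    (h : IsLarge (natSum α β) (A ∪ B)) : IsLarge α A ∨ IsLarge β B := by
  generalize hS : A ∪ B = S at hsep hbound h
  induction S using Finset.induction_on_min generalizing A B α β with
  | empty => exact Or.inl (natSum_eq_nil (isLarge_empty.1 h) ▸ isLarge_nil A)
  | insert x S hx ih =>
    wlog hxB : x ∈ B generalizing A B α β with H
    · have hxA : x ∈ A := by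
        have := hS ▸ Finset.mem_insert_self x S
        exact (Finset.mem_union.1 this).resolve_right hxB
      rw [Finset.union_comm] at hS
      rw [natSum_comm] at h
      exact (H hdisj.symm hβ hα hS (fun z hz => by have := hbound z hz; omega) h hxA).symm
    rcases eq_or_ne β [] with rfl | hβ0
    · exact Or.inr (isLarge_nil B)
    have hS' : A ∪ B.erase x = S := by
      rw [← Finset.erase_eq_of_notMem (Finset.disjoint_right.1 hdisj hxB),
        ← Finset.erase_union_distrib, hS, Finset.erase_insert fun h => lt_irrefl x (hx x h)]
    have hsparse : ∀ z ∈ S, 4 ^ x < z := fun z hz =>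
      hsep x (Finset.mem_insert_self x S) z (Finset.mem_insert_of_mem hz) (hx z hz)
    have hbx := hbound x (Finset.mem_insert_self x S)
    have h' : IsLarge (natSum α (KSstep β x)) S :=
      ((isLarge_insert hx).1 h).of_ksReach (fun z hz => by have := hsparse z hz; omega)
        (ksReach_KSstep_natSum hβ hβ0 le_rfl)
    refine (ih (hdisj.mono_right (Finset.erase_subset x B)) hα (hβ.KSstep x) hS'
      (hsep.mono (Finset.subset_insert x S)) (fun z hz => ?_) h').imp id fun hB => ?_
    · have := length_KSstep_le β x
      have := hsparse z hz
      have := two_mul_le_four_pow z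
      omega
    · rwa [← Finset.insert_erase hxB,
        isLarge_insert fun z hz => hx z (hS' ▸ Finset.mem_union_right A hz)]

lemma isLarge_or_isLarge_of_isLarge_replicate_add {A B : Finset ℕ} {a b n : ℕ}
    (hsep : ExpSeparated (A ∪ B)) (hdisj : Disjoint A B)
    (hbound : ∀ z ∈ A ∪ B, a + b + z ≤ 4 ^ z)
    (h : IsLarge (List.replicate (a + b) n) (A ∪ B)) :
    IsLarge (List.replicate a n) A ∨ IsLarge (List.replicate b n) B :=
  isLarge_or_isLarge_of_isLarge_natSum hsep hdisj List.pairwise_replicate_of_refl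
    List.pairwise_replicate_of_refl (by simpa using hbound) (natSum_replicate a b n ▸ h)

lemma IsLarge.singleton_of_replicate {Y : Finset ℕ} {m n : ℕ} (hm : m ≠ 0)
    (hsep : ExpSeparated Y) (hbound : ∀ z ∈ Y, m + z ≤ 4 ^ z)
    (h : IsLarge (List.replicate m n) Y) : IsLarge [n] Y := by
  obtain ⟨k, rfl⟩ : ∃ k, m = k + 1 := ⟨m - 1, by omega⟩
  rw [← Finset.empty_union Y] at hsep hbound h
  rcases isLarge_or_isLarge_of_isLarge_replicate_add hsep (Finset.disjoint_empty_left Y) hbound h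
    with h0 | h1
  · rw [isLarge_empty, List.replicate_eq_nil_iff] at h0
    subst h0
    simpa using h
  · exact h1

theorem exists_subset_isLarge_homogeneous (P : ℕ → ℕ → Fin 2) (n : ℕ) (W : Finset ℕ)
    {Y : Finset ℕ} {m : ℕ} (hsep : ExpSeparated Y) (hbound : ∀ z ∈ Y, m + z ≤ 4 ^ z)
    (hm : 2 ^ W.card ≤ m) (h : IsLarge (List.replicate m n) Y) :
    ∃ Z ⊆ Y, IsLarge [n] Z ∧ ∀ w ∈ W, ∀ y ∈ Z, ∀ y' ∈ Z, P y w = P y' w := by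
  induction W using Finset.induction_on generalizing Y m with
  | empty =>
    refine ⟨Y, subset_rfl, h.singleton_of_replicate ?_ hsep hbound, by simp⟩
    simp at hm
    omega
  | insert w W hw ih =>
    rw [Finset.card_insert_of_notMem hw, pow_succ] at hm
    let Yc (i : Fin 2) := Y.filter (fun y => P y w = i)
    have hY : Yc 0 ∪ Yc 1 = Y := by
      rw [← Finset.filter_or, Finset.filter_true_of_mem fun y _ => by omega]
    have hdisj : Disjoint (Yc 0) (Yc 1) := Finset.disjoint_filter.2 fun y _ h0 h1 => by omega
    obtain ⟨i, k, hk, hkm, hlarge⟩ :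
        ∃ i k, 2 ^ W.card ≤ k ∧ k ≤ m ∧ IsLarge (List.replicate k n) (Yc i) := by
      rw [← hY] at hsep hbound
      have h' : IsLarge (List.replicate (m / 2 + (m - m / 2)) n) (Yc 0 ∪ Yc 1) := by
        rwa [Nat.add_sub_cancel' (Nat.div_le_self m 2), hY]
      rcases isLarge_or_isLarge_of_isLarge_replicate_add hsep hdisj
        (fun z hz => by rw [Nat.add_sub_cancel' (Nat.div_le_self m 2)]; exact hbound z hz) h'
        with h0 | h1
      exacts [⟨0, m / 2, by omega, by omega, h0⟩, ⟨1, m - m / 2, by omega, by omega, h1⟩]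
    obtain ⟨Z, hZ, hZlarge, hZW⟩ := ih (hsep.mono (Finset.filter_subset _ Y))
      (fun z hz => (Nat.add_le_add_right hkm z).trans (hbound z (Finset.filter_subset _ Y hz)))
      hk hlarge
    refine ⟨Z, hZ.trans (Finset.filter_subset _ Y), hZlarge, Finset.forall_mem_insert _ _ _ |>.2
      ⟨fun y hy y' hy' => ?_, hZW⟩⟩
    rw [(Finset.mem_filter.1 (hZ hy)).2, (Finset.mem_filter.1 (hZ hy')).2]

theorem stabilize_from_above_general (n : ℕ) (X : Finset ℕ)
    (hX : IsLarge [n + 1] X) (hs : ExpSparse X)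
    (c : ℕ) (hc : ∀ x ∈ X, 4 ^ c ≤ x)
    (W : Finset ℕ) (hWcard : W.card ≤ c)
    (P : ℕ → ℕ → Fin 2) :
    ∃ Y ⊆ X, IsLarge [n] Y ∧ ∀ w ∈ W, ∀ y ∈ Y, ∀ y' ∈ Y, P y w = P y' w := by
  have hne : X.Nonempty := Finset.nonempty_iff_ne_empty.2 fun h => by
    simp [h, isLarge_empty] at hX
  set x₀ := X.min' hne
  have hY : IsLarge (List.replicate x₀ n) (X.erase x₀) := by
    rwa [← Finset.insert_erase (X.min'_mem hne),
      isLarge_insert fun z => X.min'_lt_of_mem_erase_min' hne] at hX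
  have hpow : 2 ^ W.card ≤ x₀ := calc
    2 ^ W.card ≤ 2 ^ c := Nat.pow_le_pow_right two_pos hWcard
    _ ≤ 4 ^ c := Nat.pow_le_pow_left (by norm_num) c
    _ ≤ x₀ := hc x₀ (X.min'_mem hne)
  have hbound : ∀ z ∈ X.erase x₀, x₀ + z ≤ 4 ^ z := fun z hz => by
    have := X.min'_le z (Finset.mem_of_mem_erase hz)
    have := two_mul_le_four_pow z
    omega
  obtain ⟨Y, hYX, hYlarge, hYW⟩ := exists_subset_isLarge_homogeneous P n W
    (ExpSeparated.mono hs.2 (Finset.erase_subset x₀ X)) hbound hpow hY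
  exact ⟨Y, hYX.trans (Finset.erase_subset x₀ X), hYlarge, hYW⟩

/-- Let `X ⊆ ℕ` be a finite set which is `ω^{n+1}`-large and exp-sparse, and let
`c ∈ ℕ` with `4^c ≤ min X`. For any finite `W ⊆ ℕ` with `|W| ≤ c` and `max X < min W`,
and for any colouring `P : [X ∪ W]² → 2`, there exists `Y ⊆ X` such that `Y` is
`ω^n`-large and `P(y, w) = P(y', w)` for all `w ∈ W` and all `y, y' ∈ Y`. -/
theorem stabilize_from_above (n : ℕ) (X : Finset ℕ)
    (hX : IsLarge [n + 1] X) (hs : ExpSparse X)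
    (c : ℕ) (hc : ∀ x ∈ X, 4 ^ c ≤ x)
    (W : Finset ℕ) (hWcard : W.card ≤ c) (hXW : ∀ x ∈ X, ∀ w ∈ W, x < w)
    (P : ℕ → ℕ → Fin 2) :
    ∃ Y ⊆ X, IsLarge [n] Y ∧ ∀ w ∈ W, ∀ y ∈ Y, ∀ y' ∈ Y, P y w = P y' w :=
  stabilize_from_above_general n X hX hs c hc W hWcard P
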